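/- Let m = 3 and suppose 0 ≤ x₁ < x₂ < x₃ ≤ 1 satisfy: F(x₁) = 1/3, F(x₃) = 2/3, x₁ + δ ≤ x₂ ≤ x₃ − δ, and F((x₂ + x₃)/2) − F(x₂) = 1/6. Then X = (x₁, x₂, x₃) is a (1/6 + Mδ)-equilibrium at separation δ. -/
import Mathlib


open MeasureTheory Classical

/-- `Fcdf f y = ∫₀^y f`, the mass of voters in `[0, y]`. -/
noncomputable def Fcdf (f : ℝ → ℝ) (y : ℝ) : ℝ := ∫ z in (0:ℝ)..y, f z

/-- Utility (vote share) of a candidate located at `p`, given the set `S` of the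
positions of the other candidates: he receives the voters between the midpoint with his
nearest left neighbour (or `0` if none) and the midpoint with his nearest right
neighbour (or `1` if none). -/
noncomputable def util (f : ℝ → ℝ) (p : ℝ) (S : Set ℝ) : ℝ :=
  Fcdf f (if {s ∈ S | p < s}.Nonempty then (p + sInf {s ∈ S | p < s}) / 2 else 1)
    - Fcdf f (if {s ∈ S | s < p}.Nonempty then (p + sSup {s ∈ S | s < p}) / 2 else 0)

/-- `X = (x₁, x₂, x₃)` (with `x₁ < x₂ < x₃`) is an `ε`-equilibrium at separation `δ`:
no candidate can move to an admissible location (within `[0,1]`, at distance at least `δ`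
from every other candidate) and increase his utility by more than `ε`. -/
def IsEquilibrium3 (f : ℝ → ℝ) (x₁ x₂ x₃ δ ε : ℝ) : Prop :=
  (∀ x' ∈ Set.Icc (0:ℝ) 1, δ ≤ |x' - x₂| → δ ≤ |x' - x₃| →
      util f x' {x₂, x₃} ≤ util f x₁ {x₂, x₃} + ε) ∧
  (∀ x' ∈ Set.Icc (0:ℝ) 1, δ ≤ |x' - x₁| → δ ≤ |x' - x₃| →
      util f x' {x₁, x₃} ≤ util f x₂ {x₁, x₃} + ε) ∧
  (∀ x' ∈ Set.Icc (0:ℝ) 1, δ ≤ |x' - x₁| → δ ≤ |x' - x₂| →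
      util f x' {x₁, x₂} ≤ util f x₃ {x₁, x₂} + ε)

lemma util_left (f : ℝ → ℝ) (a b p : ℝ) (hpa : p < a) (hab : a < b) :
    util f p {a, b} = Fcdf f ((p + a) / 2) - Fcdf f 0 := by
  have h1 : {s ∈ ({a, b} : Set ℝ) | p < s} = {a, b} := by
    ext s
    simp only [Set.mem_setOf_eq, Set.mem_insert_iff, Set.mem_singleton_iff]
    constructor
    · rintro ⟨h, _⟩; exact h
    · rintro (rfl | rfl)
      · exact ⟨Or.inl rfl, hpa⟩
      · exact ⟨Or.inr rfl, hpa.trans hab⟩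
  have h2 : {s ∈ ({a, b} : Set ℝ) | s < p} = (∅ : Set ℝ) := by
    ext s
    simp only [Set.mem_setOf_eq, Set.mem_insert_iff, Set.mem_singleton_iff,
      Set.mem_empty_iff_false, iff_false, not_and]
    rintro (rfl | rfl) <;> linarith
  unfold util
  rw [h1, h2, if_pos ⟨a, by simp⟩, if_neg (by simp), csInf_pair, min_eq_left hab.le]

lemma util_mid (f : ℝ → ℝ) (a b p : ℝ) (hap : a < p) (hpb : p < b) :
    util f p {a, b} = Fcdf f ((p + b) / 2) - Fcdf f ((p + a) / 2) := by
  have h1 : {s ∈ ({a, b} : Set ℝ) | p < s} = {b} := by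
    ext s
    simp only [Set.mem_setOf_eq, Set.mem_insert_iff, Set.mem_singleton_iff]
    constructor
    · rintro ⟨rfl | rfl, h⟩
      · linarith
      · rfl
    · rintro rfl; exact ⟨Or.inr rfl, hpb⟩
  have h2 : {s ∈ ({a, b} : Set ℝ) | s < p} = {a} := by
    ext s
    simp only [Set.mem_setOf_eq, Set.mem_insert_iff, Set.mem_singleton_iff]
    constructor
    · rintro ⟨rfl | rfl, h⟩
      · rfl
      · linarith
    · rintro rfl; exact ⟨Or.inl rfl, hap⟩
  unfold util
  rw [h1, h2, if_pos ⟨b, rfl⟩, if_pos ⟨a, rfl⟩, csInf_singleton, csSup_singleton]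

lemma util_right (f : ℝ → ℝ) (a b p : ℝ) (hab : a < b) (hbp : b < p) :
    util f p {a, b} = Fcdf f 1 - Fcdf f ((p + b) / 2) := by
  have h1 : {s ∈ ({a, b} : Set ℝ) | p < s} = (∅ : Set ℝ) := by
    ext s
    simp only [Set.mem_setOf_eq, Set.mem_insert_iff, Set.mem_singleton_iff,
      Set.mem_empty_iff_false, iff_false, not_and]
    rintro (rfl | rfl) <;> linarith
  have h2 : {s ∈ ({a, b} : Set ℝ) | s < p} = {a, b} := by
    ext s
    simp only [Set.mem_setOf_eq, Set.mem_insert_iff, Set.mem_singleton_iff]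
    constructor
    · rintro ⟨h, _⟩; exact h
    · rintro (rfl | rfl)
      · exact ⟨Or.inl rfl, hab.trans hbp⟩
      · exact ⟨Or.inr rfl, hbp⟩
  unfold util
  rw [h1, h2, if_neg (by simp), if_pos ⟨a, by simp⟩, csSup_pair, max_eq_right hab.le]

lemma Fmono (f : ℝ → ℝ) (hfi : IntervalIntegrable f volume 0 1)
    (hf0 : ∀ z ∈ Set.Icc (0:ℝ) 1, 0 ≤ f z) {a b : ℝ}
    (ha : 0 ≤ a) (hab : a ≤ b) (hb : b ≤ 1) : Fcdf f a ≤ Fcdf f b := by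
  have hb0 : (0:ℝ) ≤ b := ha.trans hab
  have hia : IntervalIntegrable f volume 0 a := by
    apply hfi.mono_set
    rw [Set.uIcc_of_le ha, Set.uIcc_of_le (by norm_num : (0:ℝ) ≤ 1)]
    exact Set.Icc_subset_Icc le_rfl (hab.trans hb)
  have hib : IntervalIntegrable f volume 0 b := by
    apply hfi.mono_set
    rw [Set.uIcc_of_le hb0, Set.uIcc_of_le (by norm_num : (0:ℝ) ≤ 1)]
    exact Set.Icc_subset_Icc le_rfl hb
  have key : Fcdf f b - Fcdf f a = ∫ z in a..b, f z := by
    unfold Fcdf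
    rw [intervalIntegral.integral_interval_sub_left hib hia]
  have pos : 0 ≤ ∫ z in a..b, f z :=
    intervalIntegral.integral_nonneg hab
      (fun z hz => hf0 z ⟨ha.trans hz.1, hz.2.trans hb⟩)
  linarith

set_option maxHeartbeats 1000000 in
/-- If `F(x₁) = 1/3`, `F(x₃) = 2/3`, `x₁ + δ ≤ x₂ ≤ x₃ − δ` and
`F((x₂+x₃)/2) − F(x₂) = 1/6`, then `(x₁, x₂, x₃)` is a (1/6 + Mδ)-equilibrium at
separation δ. -/
theorem stmt7 (f : ℝ → ℝ) (M δ x₁ x₂ x₃ : ℝ)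
    (hM : 0 < M)
    (hfi : IntervalIntegrable f volume 0 1)
    (hf0 : ∀ z ∈ Set.Icc (0:ℝ) 1, 0 ≤ f z)
    (hfM : ∀ z ∈ Set.Icc (0:ℝ) 1, f z ≤ M)
    (hf1 : (∫ z in (0:ℝ)..1, f z) = 1)
    (hδ : 0 < δ) (hMδ : M * δ < 1/1000)
    (h0 : 0 ≤ x₁) (h12 : x₁ < x₂) (h23 : x₂ < x₃) (h3 : x₃ ≤ 1)
    (hF1 : Fcdf f x₁ = 1/3) (hF3 : Fcdf f x₃ = 2/3)
    (hsep12 : x₁ + δ ≤ x₂) (hsep23 : x₂ ≤ x₃ - δ)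
    (hmid : Fcdf f ((x₂ + x₃) / 2) - Fcdf f x₂ = 1/6) :
    IsEquilibrium3 f x₁ x₂ x₃ δ (1/6 + M * δ) := by
  have mo : ∀ a b : ℝ, 0 ≤ a → a ≤ b → b ≤ 1 → Fcdf f a ≤ Fcdf f b :=
    fun a b ha hab hb => Fmono f hfi hf0 ha hab hb
  have hF0 : Fcdf f 0 = 0 := intervalIntegral.integral_same
  have hFone : Fcdf f 1 = 1 := hf1
  have h13 : x₁ < x₃ := h12.trans h23
  have h20 : (0:ℝ) ≤ x₂ := h0.trans h12.le
  have h30 : (0:ℝ) ≤ x₃ := h20.trans h23.le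
  have h21 : x₂ ≤ 1 := h23.le.trans h3
  have h11 : x₁ ≤ 1 := h12.le.trans h21
  have hMδ0 : 0 < M * δ := mul_pos hM hδ
  have hb2lo : Fcdf f x₁ ≤ Fcdf f ((x₂ + x₃) / 2) := mo _ _ h0 (by linarith) (by linarith)
  have hb2hi : Fcdf f ((x₂ + x₃) / 2) ≤ Fcdf f x₃ := mo _ _ (by linarith) (by linarith) h3
  have hx2lo : (1:ℝ)/6 ≤ Fcdf f x₂ := by linarith
  have hx2hi : Fcdf f x₂ ≤ 1/2 := by linarith
  have U1 : util f x₁ {x₂, x₃} = Fcdf f ((x₁ + x₂) / 2) - Fcdf f 0 :=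
    util_left f x₂ x₃ x₁ h12 h23
  have U1lo : (1:ℝ)/3 ≤ util f x₁ {x₂, x₃} := by
    have := mo x₁ ((x₁ + x₂) / 2) h0 (by linarith) (by linarith)
    rw [U1]; linarith
  have U2 : util f x₂ {x₁, x₃} = Fcdf f ((x₂ + x₃) / 2) - Fcdf f ((x₂ + x₁) / 2) :=
    util_mid f x₁ x₃ x₂ h12 h23
  have U2lo : (1:ℝ)/6 ≤ util f x₂ {x₁, x₃} := by
    have := mo ((x₂ + x₁) / 2) x₂ (by linarith) (by linarith) h21
    rw [U2]; linarith
  have U3 : util f x₃ {x₁, x₂} = Fcdf f 1 - Fcdf f ((x₂ + x₃) / 2) := by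
    rw [util_right f x₁ x₂ x₃ h12 h23]
    norm_num [add_comm x₃ x₂]
  have U3val : util f x₃ {x₁, x₂} = 1 - Fcdf f x₂ - 1/6 := by rw [U3]; linarith
  refine ⟨?_, ?_, ?_⟩
  · -- candidate 1
    rintro x' ⟨hx'0, hx'1⟩ hA hB
    rcases le_abs.mp hA with hA | hA <;> rcases le_abs.mp hB with hB | hB
    · rw [util_right f x₂ x₃ x' h23 (by linarith)]
      have := mo x₃ ((x' + x₃) / 2) h30 (by linarith) (by linarith)
      linarith
    · rw [util_mid f x₂ x₃ x' (by linarith) (by linarith)]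
      have h1 := mo ((x' + x₃) / 2) x₃ (by linarith) (by linarith) h3
      have h2 := mo x₂ ((x' + x₂) / 2) h20 (by linarith) (by linarith)
      linarith
    · linarith
    · rw [util_left f x₂ x₃ x' (by linarith) h23]
      have := mo ((x' + x₂) / 2) x₂ (by linarith) (by linarith) h21
      linarith
  · -- candidate 2
    rintro x' ⟨hx'0, hx'1⟩ hA hB
    rcases le_abs.mp hA with hA | hA <;> rcases le_abs.mp hB with hB | hB
    · rw [util_right f x₁ x₃ x' h13 (by linarith)]
      have := mo x₃ ((x' + x₃) / 2) h30 (by linarith) (by linarith)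
      linarith
    · rw [util_mid f x₁ x₃ x' (by linarith) (by linarith)]
      have h1 := mo ((x' + x₃) / 2) x₃ (by linarith) (by linarith) h3
      have h2 := mo x₁ ((x' + x₁) / 2) h0 (by linarith) (by linarith)
      linarith
    · linarith
    · rw [util_left f x₁ x₃ x' (by linarith) h13]
      have := mo ((x' + x₁) / 2) x₁ (by linarith) (by linarith) h11
      linarith
  · -- candidate 3
    rintro x' ⟨hx'0, hx'1⟩ hA hB
    rcases le_abs.mp hA with hA | hA <;> rcases le_abs.mp hB with hB | hB
    · rw [util_right f x₁ x₂ x' h12 (by linarith)]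
      have := mo x₂ ((x' + x₂) / 2) h20 (by linarith) (by linarith)
      linarith
    · rw [util_mid f x₁ x₂ x' (by linarith) (by linarith)]
      have h1 := mo ((x' + x₂) / 2) x₂ (by linarith) (by linarith) h21
      have h2 := mo x₁ ((x' + x₁) / 2) h0 (by linarith) (by linarith)
      linarith
    · linarith
    · rw [util_left f x₁ x₂ x' (by linarith) h12]
      have := mo ((x' + x₁) / 2) x₁ (by linarith) (by linarith) h11
      linarith
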